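/- arXiv:1310.8442 — 2 statements merged into one kernel-verified Lean document; each statement's English description precedes it below -/
import Mathlib

section
/- Let s ≥ 5 and n ≥ s be integers, and let G be a {1,3}-graph on vertex set [n] whose singleton edges are exactly {1}, {2}, {3}, {4} and whose 3-uniform edge set E³ contains all 3-element subsets of [s]. Then λ'(G) > 1 + 3/8 = λ'(K_4^{{1,3}}). In particular, the legal weighting with x_1 = x_2 = x_3 = x_4 = 0.2498, x_5 = … = x_s = 0.0008/(s-4), and x_{s+1} = … = x_n = 0 witnesses this strict inequality. -/
open Finset

/-- λ'(H,x) = Σ_{e∈E} |e|! · ∏_{i∈e} x_i  (equals Σ_{j∈R(H)} j!·Σ_{|e|=j} ∏ x_i). -/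
noncomputable def lagPoly {n : ℕ} (E : Finset (Finset (Fin n))) (x : Fin n → ℝ) : ℝ :=
  ∑ e ∈ E, (Nat.factorial e.card : ℝ) * ∏ i ∈ e, x i

/-- A legal weighting: nonnegative entries summing to 1. -/
def isLegal {n : ℕ} (x : Fin n → ℝ) : Prop :=
  (∑ i, x i) = 1 ∧ ∀ i, 0 ≤ x i

/-- The Lagrangian λ'(H): the maximum of λ'(H,x) over legal weightings. -/
noncomputable def lagrangian {n : ℕ} (E : Finset (Finset (Fin n))) : ℝ :=
  sSup {v : ℝ | ∃ x : Fin n → ℝ, isLegal x ∧ lagPoly E x = v}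

/-- Edge set of the complete hypergraph K_t^R on vertex set [t]. -/
def completeEdges (t : ℕ) (R : Finset ℕ) : Finset (Finset (Fin t)) :=
  Finset.univ.filter (fun e => e.card ∈ R)

/-- S induces a complete R-subgraph: every subset of S with cardinality in R is an edge. -/
def isCompleteSub {n : ℕ} (E : Finset (Finset (Fin n))) (R : Finset ℕ) (S : Finset (Fin n)) : Prop :=
  ∀ e ⊆ S, e.card ∈ R → e ∈ E

/-- The maximum complete R-subgraph of H has order t. -/
def maxCompleteOrder {n : ℕ} (E : Finset (Finset (Fin n))) (R : Finset ℕ) (t : ℕ) : Prop :=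
  (∃ S, S.card = t ∧ isCompleteSub E R S) ∧ ∀ S, isCompleteSub E R S → S.card ≤ t

/-!
Put weight `a = 0.2498` on each of the four singleton vertices `A = {1,2,3,4}` and spread the
remaining `0.0008` evenly over `B = {5,…,s}`. The singletons contribute `4a`, and the 3-edges
inside `[s]` contribute `3!·e₃(x|_{A ∪ B}) ≥ 6 (e₃(x|_A) + e₂(x|_A)·x(B))`, because adding a vertex
`v` to a set `C ⊇ A` raises `e₃` by `x_v·e₂(x|_C) ≥ x_v·e₂(x|_A)`. Hence
`λ'(G) ≥ 4a + 6 (4a³ + 6a²·0.0008) ≈ 1.37510 > 11/8`.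
On `K_4^{1,3}` we have `λ' = Σ xᵢ + 6 e₃(x) ≤ 1 + 6/16` by Maclaurin's inequality, with equality
at the uniform weighting.
-/

open Nat

section ElementarySymmetric

variable {ι R : Type*} [CommSemiring R]

theorem sum_powersetCard_succ_insert_prod [DecidableEq ι] (x : ι → R) {v : ι} {S : Finset ι}
    (hv : v ∉ S) (k : ℕ) :
    ∑ T ∈ (insert v S).powersetCard (k + 1), ∏ i ∈ T, x i =
      ∑ T ∈ S.powersetCard (k + 1), ∏ i ∈ T, x i + x v * ∑ T ∈ S.powersetCard k, ∏ i ∈ T, x i := by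
  have hvT : ∀ T ∈ S.powersetCard k, v ∉ T := fun T hT hvT => hv ((mem_powersetCard.1 hT).1 hvT)
  have hdisj : Disjoint (S.powersetCard (k + 1)) ((S.powersetCard k).image (insert v)) := by
    refine disjoint_left.2 fun T hT hT' => ?_
    obtain ⟨U, -, rfl⟩ := mem_image.1 hT'
    exact hv ((mem_powersetCard.1 hT).1 (mem_insert_self v U))
  have hinj : Set.InjOn (insert v) (S.powersetCard k : Set (Finset ι)) := fun T hT U hU hTU => by
    rw [← erase_insert (hvT T hT), hTU, erase_insert (hvT U hU)]
  rw [powersetCard_succ_insert hv, sum_union hdisj, sum_image hinj, mul_sum]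
  exact congrArg _ (sum_congr rfl fun T hT => prod_insert (hvT T hT))

theorem sum_powersetCard_prod_of_eqOn_const {x : ι → R} {A : Finset ι} {a : R}
    (h : ∀ i ∈ A, x i = a) (k : ℕ) :
    ∑ T ∈ A.powersetCard k, ∏ i ∈ T, x i = A.card.choose k * a ^ k := by
  rw [sum_congr rfl fun T hT => (prod_congr rfl fun i hi => h i ((mem_powersetCard.1 hT).1 hi)),
    sum_congr rfl fun T hT => by rw [prod_const, (mem_powersetCard.1 hT).2], sum_const,
    card_powersetCard, nsmul_eq_mul]

variable [PartialOrder R] [IsOrderedRing R]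

theorem sum_powersetCard_prod_mono {x : ι → R} (hx : ∀ i, 0 ≤ x i) {A S : Finset ι}
    (h : A ⊆ S) (k : ℕ) :
    ∑ T ∈ A.powersetCard k, ∏ i ∈ T, x i ≤ ∑ T ∈ S.powersetCard k, ∏ i ∈ T, x i :=
  sum_le_sum_of_subset_of_nonneg (powersetCard_mono h) fun _ _ _ => prod_nonneg fun i _ => hx i

theorem sum_powersetCard_prod_union_ge [DecidableEq ι] {x : ι → R} (hx : ∀ i, 0 ≤ x i)
    {A B : Finset ι} (hAB : Disjoint A B) (k : ℕ) :
    ∑ T ∈ A.powersetCard (k + 1), ∏ i ∈ T, x i +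
        (∑ T ∈ A.powersetCard k, ∏ i ∈ T, x i) * ∑ i ∈ B, x i ≤
      ∑ T ∈ (A ∪ B).powersetCard (k + 1), ∏ i ∈ T, x i := by
  induction B using Finset.induction_on with
  | empty => simp
  | @insert v B hvB ih =>
    have hvA : v ∉ A := disjoint_right.1 hAB (mem_insert_self v B)
    have hvAB : v ∉ A ∪ B := by simp [hvA, hvB]
    calc _ = (∑ T ∈ A.powersetCard (k + 1), ∏ i ∈ T, x i +
            (∑ T ∈ A.powersetCard k, ∏ i ∈ T, x i) * ∑ i ∈ B, x i) +
          x v * ∑ T ∈ A.powersetCard k, ∏ i ∈ T, x i := by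
          rw [sum_insert hvB]; ring
      _ ≤ ∑ T ∈ (A ∪ B).powersetCard (k + 1), ∏ i ∈ T, x i +
          x v * ∑ T ∈ (A ∪ B).powersetCard k, ∏ i ∈ T, x i :=
          add_le_add (ih (disjoint_of_subset_right (subset_insert v B) hAB))
            (mul_le_mul_of_nonneg_left (sum_powersetCard_prod_mono hx subset_union_left k) (hx v))
      _ = _ := by rw [union_insert, sum_powersetCard_succ_insert_prod x hvAB]

end ElementarySymmetric

section Lagrangian

variable {n : ℕ}

theorem lagPoly_mono {E F : Finset (Finset (Fin n))} {x : Fin n → ℝ} (hx : ∀ i, 0 ≤ x i)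
    (h : F ⊆ E) : lagPoly F x ≤ lagPoly E x :=
  sum_le_sum_of_subset_of_nonneg h fun _ _ _ =>
    mul_nonneg (Nat.cast_nonneg _) (prod_nonneg fun i _ => hx i)

theorem lagPoly_powersetCard (S : Finset (Fin n)) (k : ℕ) (x : Fin n → ℝ) :
    lagPoly (S.powersetCard k) x = k ! * ∑ T ∈ S.powersetCard k, ∏ i ∈ T, x i := by
  rw [lagPoly, mul_sum]
  exact sum_congr rfl fun T hT => by rw [(mem_powersetCard.1 hT).2]

theorem lagPoly_powersetCard_union {j k : ℕ} (hjk : j ≠ k) (A S : Finset (Fin n))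
    (x : Fin n → ℝ) :
    lagPoly (A.powersetCard j ∪ S.powersetCard k) x =
      j ! * ∑ T ∈ A.powersetCard j, ∏ i ∈ T, x i + k ! * ∑ T ∈ S.powersetCard k, ∏ i ∈ T, x i := by
  have hdisj : Disjoint (A.powersetCard j) (S.powersetCard k) := disjoint_left.2 fun T hA hS =>
    hjk ((mem_powersetCard.1 hA).2.symm.trans (mem_powersetCard.1 hS).2)
  rw [lagPoly, sum_union hdisj, ← lagPoly, ← lagPoly, lagPoly_powersetCard, lagPoly_powersetCard]

theorem lagPoly_powersetCard_union_le {j k : ℕ} {E : Finset (Finset (Fin n))}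
    {x : Fin n → ℝ} (hx : ∀ i, 0 ≤ x i) (hjk : j ≠ k) {A S : Finset (Fin n)}
    (hA : A.powersetCard j ⊆ E) (hS : S.powersetCard k ⊆ E) :
    j ! * ∑ T ∈ A.powersetCard j, ∏ i ∈ T, x i + k ! * ∑ T ∈ S.powersetCard k, ∏ i ∈ T, x i ≤
      lagPoly E x :=
  lagPoly_powersetCard_union hjk A S x ▸ lagPoly_mono hx (union_subset hA hS)

theorem bddAbove_lagPoly_legal (E : Finset (Finset (Fin n))) :
    BddAbove {v : ℝ | ∃ x : Fin n → ℝ, isLegal x ∧ lagPoly E x = v} := by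
  refine ⟨∑ e ∈ E, (e.card ! : ℝ), ?_⟩
  rintro _ ⟨x, ⟨hsum, hnn⟩, rfl⟩
  have hle : ∀ i, x i ≤ 1 := fun i => hsum ▸ single_le_sum (fun j _ => hnn j) (mem_univ i)
  exact sum_le_sum fun e _ => mul_le_of_le_one_right (Nat.cast_nonneg _)
    (prod_le_one (fun i _ => hnn i) fun i _ => hle i)

theorem lagPoly_le_lagrangian {E : Finset (Finset (Fin n))} {x : Fin n → ℝ} (hx : isLegal x) :
    lagPoly E x ≤ lagrangian E :=
  le_csSup (bddAbove_lagPoly_legal E) ⟨x, hx, rfl⟩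

theorem lagrangian_eq_lagPoly_of_forall_le {E : Finset (Finset (Fin n))} {x : Fin n → ℝ}
    (hx : isLegal x) (hmax : ∀ y, isLegal y → lagPoly E y ≤ lagPoly E x) :
    lagrangian E = lagPoly E x :=
  IsGreatest.csSup_eq ⟨⟨x, hx, rfl⟩, by rintro _ ⟨y, hy, rfl⟩; exact hmax y hy⟩

end Lagrangian

theorem lagPoly_completeEdges_four_one_three (x : Fin 4 → ℝ) :
    lagPoly (completeEdges 4 {1, 3}) x =
      (x 0 + x 1 + x 2 + x 3) +
        6 * (x 0 * x 1 * x 2 + x 0 * x 1 * x 3 + x 0 * x 2 * x 3 + x 1 * x 2 * x 3) := by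
  rw [show completeEdges 4 {1, 3} =
    {{0}, {1}, {2}, {3}, {0, 1, 2}, {0, 1, 3}, {0, 2, 3}, {1, 2, 3}} by decide]
  simp +decide [lagPoly]
  ring

theorem lagrangian_completeEdges_four_one_three :
    lagrangian (completeEdges 4 {1, 3}) = 1 + 3 / 8 := by
  have hlegal : isLegal (fun _ : Fin 4 => (1 / 4 : ℝ)) :=
    ⟨by rw [Fin.sum_univ_four]; norm_num, fun _ => by norm_num⟩
  rw [lagrangian_eq_lagPoly_of_forall_le hlegal, lagPoly_completeEdges_four_one_three]
  · norm_num
  rintro y ⟨hsum, hnn⟩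
  rw [lagPoly_completeEdges_four_one_three, lagPoly_completeEdges_four_one_three]
  rw [Fin.sum_univ_four] at hsum
  have h0 := hnn 0; have h1 := hnn 1; have h2 := hnn 2; have h3 := hnn 3
  nlinarith [sq_nonneg (y 0 - y 1), sq_nonneg (y 0 - y 2), sq_nonneg (y 0 - y 3),
    sq_nonneg (y 1 - y 2), sq_nonneg (y 1 - y 3), sq_nonneg (y 2 - y 3),
    sq_nonneg (y 0 + y 1 - y 2 - y 3), sq_nonneg (y 0 + y 2 - y 1 - y 3),
    sq_nonneg (y 0 + y 3 - y 1 - y 2),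
    mul_nonneg h0 h1, mul_nonneg h2 h3, mul_nonneg h0 h2, mul_nonneg h1 h3,
    mul_nonneg h0 h3, mul_nonneg h1 h2]

def initialSeg (n k : ℕ) : Finset (Fin n) := {i | (i : ℕ) < k}

@[simp]
theorem mem_initialSeg {n k : ℕ} {i : Fin n} : i ∈ initialSeg n k ↔ (i : ℕ) < k :=
  mem_filter_univ i

theorem card_initialSeg {n k : ℕ} (hk : k ≤ n) : #(initialSeg n k) = k := by
  rw [initialSeg, Fin.card_filter_val_lt, min_eq_right hk]

theorem initialSeg_mono {n k l : ℕ} (hkl : k ≤ l) : initialSeg n k ⊆ initialSeg n l :=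
  fun i => by simp only [mem_initialSeg]; omega

def stepWeight {n : ℕ} (t s : ℕ) (a b : ℝ) (v : Fin n) : ℝ :=
  if (v : ℕ) < t then a else if (v : ℕ) < s then b else 0

section StepWeight

variable {n t s : ℕ} {a b : ℝ}

theorem stepWeight_nonneg (ha : 0 ≤ a) (hb : 0 ≤ b) (v : Fin n) : 0 ≤ stepWeight t s a b v := by
  unfold stepWeight
  split_ifs <;> first | assumption | exact le_rfl

theorem stepWeight_eq_left {v : Fin n} (hv : v ∈ initialSeg n t) : stepWeight t s a b v = a :=
  if_pos (mem_initialSeg.1 hv)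

theorem stepWeight_eq_mid {v : Fin n} (hv : v ∈ initialSeg n s \ initialSeg n t) :
    stepWeight t s a b v = b := by
  simp only [mem_sdiff, mem_initialSeg] at hv
  rw [stepWeight, if_neg hv.2, if_pos hv.1]

theorem stepWeight_eq_right (hts : t ≤ s) {v : Fin n} (hv : v ∈ univ \ initialSeg n s) :
    stepWeight t s a b v = 0 := by
  simp only [mem_sdiff, mem_univ, true_and, mem_initialSeg] at hv
  rw [stepWeight, if_neg (by omega), if_neg hv]

theorem sum_stepWeight_mid (hts : t ≤ s) (hsn : s ≤ n) :
    ∑ v ∈ initialSeg n s \ initialSeg n t, stepWeight t s a b v = (s - t) * b := by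
  rw [sum_eq_card_nsmul fun v => stepWeight_eq_mid, card_sdiff_of_subset (initialSeg_mono hts),
    card_initialSeg hsn, card_initialSeg (hts.trans hsn), nsmul_eq_mul, Nat.cast_sub hts]

theorem sum_stepWeight (hts : t ≤ s) (hsn : s ≤ n) :
    ∑ v : Fin n, stepWeight t s a b v = t * a + (s - t) * b := by
  rw [← sum_sdiff (subset_univ (initialSeg n s)), ← sum_sdiff (initialSeg_mono hts),
    sum_eq_zero fun v => stepWeight_eq_right hts, sum_stepWeight_mid hts hsn,
    sum_eq_card_nsmul fun v => stepWeight_eq_left, card_initialSeg (hts.trans hsn), nsmul_eq_mul]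
  ring

theorem lagPoly_stepWeight_ge (hts : t ≤ s) (hsn : s ≤ n) (ha : 0 ≤ a) (hb : 0 ≤ b)
    {E : Finset (Finset (Fin n))} (h1 : ∀ i : Fin n, (i : ℕ) < t → {i} ∈ E)
    (h3 : ∀ e : Finset (Fin n), e.card = 3 → (∀ v ∈ e, (v : ℕ) < s) → e ∈ E) :
    t * a + 6 * (t.choose 3 * a ^ 3 + t.choose 2 * a ^ 2 * ((s - t) * b)) ≤
      lagPoly E (stepWeight t s a b) := by
  set x : Fin n → ℝ := stepWeight t s a b
  set A := initialSeg n t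
  set S := initialSeg n s
  have hx : ∀ v, 0 ≤ x v := stepWeight_nonneg ha hb
  have hxA : ∀ v ∈ A, x v = a := fun v => stepWeight_eq_left
  have hcardA : #A = t := card_initialSeg (hts.trans hsn)
  have hA1 : A.powersetCard 1 ⊆ E := fun T hT => by
    obtain ⟨i, hi, rfl⟩ := mem_map.1 ((powersetCard_one A) ▸ hT)
    exact h1 i (mem_initialSeg.1 hi)
  have hS3 : S.powersetCard 3 ⊆ E := fun T hT => by
    obtain ⟨hTS, hcard⟩ := mem_powersetCard.1 hT
    exact h3 T hcard fun v hv => mem_initialSeg.1 (hTS hv)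
  have hsplit := sum_powersetCard_prod_union_ge hx (disjoint_sdiff (s := A) (t := S)) 2
  rw [union_sdiff_of_subset (initialSeg_mono hts), sum_stepWeight_mid hts hsn,
    sum_powersetCard_prod_of_eqOn_const hxA, sum_powersetCard_prod_of_eqOn_const hxA, hcardA]
    at hsplit
  calc _ = (1 ! : ℝ) * (t.choose 1 * a ^ 1) +
        (3 ! : ℝ) * (t.choose 3 * a ^ 3 + t.choose 2 * a ^ 2 * ((s - t) * b)) := by
        simp [Nat.factorial]
    _ ≤ 1 ! * ∑ T ∈ A.powersetCard 1, ∏ i ∈ T, x i +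
          3 ! * ∑ T ∈ S.powersetCard 3, ∏ i ∈ T, x i := by
        rw [sum_powersetCard_prod_of_eqOn_const hxA, hcardA]
        gcongr
    _ ≤ lagPoly E x := lagPoly_powersetCard_union_le hx (by norm_num) hA1 hS3

end StepWeight

/-- The counterexample for t = 4: a {1,3}-graph with exactly the singletons {1},{2},{3},{4} and all
3-subsets of [s] as 3-edges has Lagrangian exceeding λ'(K_4^{1,3}) = 1 + 3/8. -/
theorem counterexample_t_four (s n : ℕ) (hs : 5 ≤ s) (hn : s ≤ n)
    (E : Finset (Finset (Fin n)))
    (h1 : E.filter (fun e => e.card = 1) =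
      ({{⟨0, by omega⟩}, {⟨1, by omega⟩}, {⟨2, by omega⟩}, {⟨3, by omega⟩}} :
        Finset (Finset (Fin n))))
    (h3 : ∀ e : Finset (Fin n), e.card = 3 → (∀ v ∈ e, (v : ℕ) < s) → e ∈ E) :
    lagrangian E > 1 + 3 / 8 ∧
    lagrangian (completeEdges 4 ({1, 3} : Finset ℕ)) = 1 + 3 / 8 ∧
    isLegal (fun v : Fin n => if (v : ℕ) < 4 then (0.2498 : ℝ)
      else if (v : ℕ) < s then (0.0008 : ℝ) / ((s : ℝ) - 4) else 0) ∧
    lagPoly E (fun v : Fin n => if (v : ℕ) < 4 then (0.2498 : ℝ)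
        else if (v : ℕ) < s then (0.0008 : ℝ) / ((s : ℝ) - 4) else 0) > 1 + 3 / 8 := by
  change _ ∧ _ ∧ isLegal (stepWeight 4 s _ _) ∧ lagPoly E (stepWeight 4 s _ _) > _
  have hs4 : (0 : ℝ) < s - 4 := by
    have : (5 : ℝ) ≤ s := by exact_mod_cast hs
    linarith
  have hb : (0 : ℝ) ≤ 0.0008 / ((s : ℝ) - 4) := by positivity
  have hmid : ((s : ℝ) - (4 : ℕ)) * (0.0008 / ((s : ℝ) - 4)) = 0.0008 := by
    rw [Nat.cast_ofNat, mul_div_cancel₀ _ hs4.ne']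
  have hlegal : isLegal (stepWeight (n := n) 4 s 0.2498 (0.0008 / ((s : ℝ) - 4))) := by
    refine ⟨?_, stepWeight_nonneg (by norm_num) hb⟩
    rw [sum_stepWeight (by omega) hn, hmid]
    norm_num
  have hsingle : ∀ i : Fin n, (i : ℕ) < 4 → {i} ∈ E := fun i hi => by
    have : {i} ∈ E.filter (fun e => e.card = 1) := by
      rw [h1]
      simp only [mem_insert, mem_singleton, singleton_inj, Fin.ext_iff]
      omega
    exact (mem_filter.1 this).1
  have hgt : lagPoly E (stepWeight 4 s 0.2498 (0.0008 / ((s : ℝ) - 4))) > 1 + 3 / 8 := by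
    refine lt_of_lt_of_le ?_ (lagPoly_stepWeight_ge (by omega) hn (by norm_num) hb hsingle h3)
    rw [hmid]
    norm_num [Nat.choose]
  exact ⟨hgt.trans_le (lagPoly_le_lagrangian hlegal), lagrangian_completeEdges_four_one_three,
    hlegal, hgt⟩
end

section
/- Let r ≥ 3 be an integer and let x, y be real numbers with y ≥ 0 and x + y < 1. If x ≥ 1/( r(r-1)·(1-x-y)^{r-2} ) + y, then x ≥ (r(r-1))^{r-3} / (r(r-1) - 1)^{r-2}. -/
/-! From the hypothesis, `x ≥ 1 / (R u^(r-2))` with `R = r(r-1)` and `u = 1 - x - y ∈ (0, 1]`,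
so `x ≥ 1 / R`, hence `R u ≤ R (1 - x) ≤ R - 1`. Feeding this upper bound on `u` back into the
hypothesis gives `x ≥ 1 / (R ((R - 1) / R)^(r-2)) = R^(r-3) / (R - 1)^(r-2)`. -/

theorem pow_div_pow_succ_le_one_div_mul_pow {R u : ℝ} (hR : 0 < R) (hu : 0 < u)
    (huR : u ≤ 1 - 1 / R) (n : ℕ) :
    R ^ n / (R - 1) ^ (n + 1) ≤ 1 / (R * u ^ (n + 1)) := by
  have hRu : R * u ≤ R - 1 := by
    calc R * u ≤ R * (1 - 1 / R) := by gcongr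
      _ = R - 1 := by field_simp
  calc R ^ n / (R - 1) ^ (n + 1) ≤ R ^ n / (R * u) ^ (n + 1) := by gcongr
    _ = 1 / (R * u ^ (n + 1)) := by field_simp; ring

/-- The arithmetic step in the proof of Theorem 6: from the key inequality one deduces the lower
bound x ≥ (r(r-1))^{r-3} / (r(r-1)-1)^{r-2}. -/
theorem key_inequality_general (r : ℕ) (hr : 3 ≤ r) (x y : ℝ) (hy : 0 ≤ y) (hxy : x + y < 1)
    (h : 1 / ((r : ℝ) * ((r : ℝ) - 1) * (1 - x - y) ^ (r - 2)) + y ≤ x) :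
    ((r : ℝ) * ((r : ℝ) - 1)) ^ (r - 3) / ((r : ℝ) * ((r : ℝ) - 1) - 1) ^ (r - 2) ≤ x := by
  rw [show r - 2 = r - 3 + 1 by omega] at h ⊢
  set R : ℝ := r * (r - 1)
  have hR : 0 < R := by
    have : (3 : ℝ) ≤ r := by exact_mod_cast hr
    nlinarith
  have hu : 0 < 1 - x - y := by linarith
  have hx_lower : 1 / (R * (1 - x - y) ^ (r - 3 + 1)) ≤ x := by linarith
  have hx : 0 < x := lt_of_lt_of_le (by positivity) hx_lower
  have hxR : 1 / R ≤ x :=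
    calc 1 / R ≤ 1 / (R * (1 - x - y) ^ (r - 3 + 1)) := by
          gcongr
          exact mul_le_of_le_one_right hR.le (pow_le_one₀ hu.le (by linarith))
      _ ≤ x := hx_lower
  exact (pow_div_pow_succ_le_one_div_mul_pow hR hu (by linarith) _).trans hx_lower
end
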